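/- For all n ≥ 0, c_1³·α^n + c_2³·β^n + c_3³·γ^n + c_4³·δ^n = (1/563)·U_n, where U_n is the Tetranacci-type sequence with U_0 = 15, U_1 = 27, U_2 = 48, U_3 = 107 and U_n = U_{n−1} + U_{n−2} + U_{n−3} + U_{n−4} for n ≥ 4. -/

import Mathlib

/-!
For a root `r` of `p = X⁴ - X³ - X² - X - 1`, the product of `r` minus the other roots is
`p'(r)`. Since `563 = -disc(p)`, the derivative `p'` is invertible modulo `p` with denominator
`563`, so `r² / p'(r) = H(r) / 563` for an explicit cubic `H`. Reducing `H³` modulo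
`p` to a cubic `G`, the sum `∑ cᵢ³ rᵢⁿ` becomes `563⁻³` times a fixed combination of the power
sums `Pₘ = ∑ rᵢᵐ`. By Vieta, `Pₘ` is the tetranacci sequence starting `4, 1, 3, 7`, and the
claimed identity reduces to one between two integer tetranacci sequences, which is checked on
the first four terms.
-/

/-- A Tetranacci-type sequence. -/
def seqU : ℕ → ℤ
  | 0 => 15
  | 1 => 27
  | 2 => 48
  | 3 => 107
  | n + 4 => seqU (n + 3) + seqU (n + 2) + seqU (n + 1) + seqU n

def tetranacci (R : Type*) [CommSemiring R] : LinearRecurrence R := ⟨4, fun _ => 1⟩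

theorem isSolution_tetranacci_iff {R : Type*} [CommSemiring R] (u : ℕ → R) :
    (tetranacci R).IsSolution u ↔ ∀ n, u (n + 4) = u (n + 3) + u (n + 2) + u (n + 1) + u n := by
  change (∀ n, u (n + 4) = ∑ i : Fin 4, 1 * u (n + i)) ↔ _
  simp only [one_mul, Fin.sum_univ_four]
  refine forall_congr' fun n => Eq.congr_right ?_
  change u n + u (n + 1) + u (n + 2) + u (n + 3) = _
  ring

theorem tetranacci_eq_of_eq_init {R : Type*} [CommRing R] {u v : ℕ → R}
    (hu : (tetranacci R).IsSolution u) (hv : (tetranacci R).IsSolution v)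
    (h : ∀ m < 4, u m = v m) (n : ℕ) : u n = v n :=
  congrFun (((tetranacci R).eq_iff_eqOn_range_order u v hu hv).2
    fun m hm => h m (Finset.mem_range.1 hm)) n

/-- The power sums of the roots of `X⁴ - X³ - X² - X - 1`. -/
def tetranacciLucas : ℕ → ℤ
  | 0 => 4
  | 1 => 1
  | 2 => 3
  | 3 => 7
  | n + 4 => tetranacciLucas (n + 3) + tetranacciLucas (n + 2) + tetranacciLucas (n + 1)
      + tetranacciLucas n

theorem isSolution_tetranacciLucas {R : Type*} [CommRing R] :
    (tetranacci R).IsSolution (fun n => (tetranacciLucas n : R)) :=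
  (isSolution_tetranacci_iff _).2 fun n => by simp [tetranacciLucas]

theorem sq_563_mul_seqU (n : ℕ) :
    563 ^ 2 * seqU n = 288256 * tetranacciLucas n + 1102354 * tetranacciLucas (n + 1)
      - 686860 * tetranacciLucas (n + 2) + 651391 * tetranacciLucas (n + 3) := by
  have hU (n : ℕ) : seqU (n + 4) = seqU (n + 3) + seqU (n + 2) + seqU (n + 1) + seqU n := rfl
  have hL (n : ℕ) : tetranacciLucas (n + 4) = tetranacciLucas (n + 3) + tetranacciLucas (n + 2)
      + tetranacciLucas (n + 1) + tetranacciLucas n := rfl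
  refine tetranacci_eq_of_eq_init (u := fun n => 563 ^ 2 * seqU n)
    (v := fun n => 288256 * tetranacciLucas n + 1102354 * tetranacciLucas (n + 1)
      - 686860 * tetranacciLucas (n + 2) + 651391 * tetranacciLucas (n + 3))
    ((isSolution_tetranacci_iff _).2 fun n => by linear_combination 563 ^ 2 * hU n)
    ((isSolution_tetranacci_iff _).2 fun n => by
      linear_combination (norm := ring_nf) 288256 * hL n + 1102354 * hL (n + 1)
        - 686860 * hL (n + 2) + 651391 * hL (n + 3))
    (fun m hm => by interval_cases m <;> decide) n

section Roots

variable {R : Type*} [CommRing R] [IsDomain R] {α β γ δ : R}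

theorem tetranacci_vieta (hα : α ^ 4 - α ^ 3 - α ^ 2 - α - 1 = 0)
    (hβ : β ^ 4 - β ^ 3 - β ^ 2 - β - 1 = 0) (hγ : γ ^ 4 - γ ^ 3 - γ ^ 2 - γ - 1 = 0)
    (hδ : δ ^ 4 - δ ^ 3 - δ ^ 2 - δ - 1 = 0)
    (hαβ : α ≠ β) (hαγ : α ≠ γ) (hαδ : α ≠ δ) (hβγ : β ≠ γ) (hβδ : β ≠ δ) (hγδ : γ ≠ δ) :
    α + β + γ + δ = 1 ∧ α * β + α * γ + α * δ + β * γ + β * δ + γ * δ = -1 ∧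
      α * β * γ + α * β * δ + α * γ * δ + β * γ * δ = 1 := by
  have divDiff {x y : R} (hx : x ^ 4 - x ^ 3 - x ^ 2 - x - 1 = 0)
      (hy : y ^ 4 - y ^ 3 - y ^ 2 - y - 1 = 0) (hxy : x ≠ y) :
      x ^ 3 + x ^ 2 * y + x * y ^ 2 + y ^ 3 - x ^ 2 - x * y - y ^ 2 - x - y - 1 = 0 :=
    mul_left_cancel₀ (sub_ne_zero.2 hxy) (by linear_combination hx - hy)
  have hαβ' := divDiff hα hβ hαβ
  have hαγ' := divDiff hα hγ hαγ
  have hαδ' := divDiff hα hδ hαδ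
  have hαβγ : α ^ 2 + β ^ 2 + γ ^ 2 + α * β + α * γ + β * γ - α - β - γ - 1 = 0 :=
    mul_left_cancel₀ (sub_ne_zero.2 hβγ) (by linear_combination hαβ' - hαγ')
  have hαβδ : α ^ 2 + β ^ 2 + δ ^ 2 + α * β + α * δ + β * δ - α - β - δ - 1 = 0 :=
    mul_left_cancel₀ (sub_ne_zero.2 hβδ) (by linear_combination hαβ' - hαδ')
  have e₁ : α + β + γ + δ - 1 = 0 :=
    mul_left_cancel₀ (sub_ne_zero.2 hγδ) (by linear_combination hαβγ - hαβδ)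
  have e₂ : α * β + α * γ + α * δ + β * γ + β * δ + γ * δ = -1 := by
    linear_combination -hαβγ + (α + β + γ) * e₁
  refine ⟨by linear_combination e₁, e₂, ?_⟩
  linear_combination hαβ' + (α + β) * e₂ + (α * β - (α + β) ^ 2) * e₁

theorem tetranacci_prod_sub_eq_deriv (hα : α ^ 4 - α ^ 3 - α ^ 2 - α - 1 = 0)
    (hβ : β ^ 4 - β ^ 3 - β ^ 2 - β - 1 = 0) (hγ : γ ^ 4 - γ ^ 3 - γ ^ 2 - γ - 1 = 0)
    (hδ : δ ^ 4 - δ ^ 3 - δ ^ 2 - δ - 1 = 0)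
    (hαβ : α ≠ β) (hαγ : α ≠ γ) (hαδ : α ≠ δ) (hβγ : β ≠ γ) (hβδ : β ≠ δ) (hγδ : γ ≠ δ) :
    (α - β) * (α - γ) * (α - δ) = 4 * α ^ 3 - 3 * α ^ 2 - 2 * α - 1 := by
  obtain ⟨e₁, e₂, e₃⟩ := tetranacci_vieta hα hβ hγ hδ hαβ hαγ hαδ hβγ hβδ hγδ
  linear_combination (-3 * α ^ 2) * e₁ + (2 * α) * e₂ - e₃

theorem tetranacci_powerSum_eq_lucas (hα : α ^ 4 - α ^ 3 - α ^ 2 - α - 1 = 0)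
    (hβ : β ^ 4 - β ^ 3 - β ^ 2 - β - 1 = 0) (hγ : γ ^ 4 - γ ^ 3 - γ ^ 2 - γ - 1 = 0)
    (hδ : δ ^ 4 - δ ^ 3 - δ ^ 2 - δ - 1 = 0)
    (hαβ : α ≠ β) (hαγ : α ≠ γ) (hαδ : α ≠ δ) (hβγ : β ≠ γ) (hβδ : β ≠ δ) (hγδ : γ ≠ δ)
    (n : ℕ) : α ^ n + β ^ n + γ ^ n + δ ^ n = tetranacciLucas n := by
  obtain ⟨e₁, e₂, e₃⟩ := tetranacci_vieta hα hβ hγ hδ hαβ hαγ hαδ hβγ hβδ hγδ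
  have hsol : (tetranacci R).IsSolution fun n => α ^ n + β ^ n + γ ^ n + δ ^ n :=
    (isSolution_tetranacci_iff _).2 fun n => by
      linear_combination α ^ n * hα + β ^ n * hβ + γ ^ n * hγ + δ ^ n * hδ
  refine tetranacci_eq_of_eq_init hsol isSolution_tetranacciLucas (fun m hm => ?_) n
  interval_cases m <;> simp only [tetranacciLucas]
  · norm_num
  · push_cast; linear_combination e₁
  · push_cast; linear_combination (α + β + γ + δ + 1) * e₁ - 2 * e₂
  · push_cast
    linear_combination ((α + β + γ + δ) ^ 2 + (α + β + γ + δ) + 4) * e₁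
      - 3 * (α + β + γ + δ) * e₂ + 3 * e₃

end Roots

theorem tetranacci_sq_div_deriv {K : Type*} [Field K] [CharZero K] {r : K}
    (hr : r ^ 4 - r ^ 3 - r ^ 2 - r - 1 = 0) :
    r ^ 2 / (4 * r ^ 3 - 3 * r ^ 2 - 2 * r - 1)
      = (86 * r ^ 3 - 61 * r ^ 2 - 71 * r - 87) / 563 := by
  have hinv : (4 * r ^ 3 - 3 * r ^ 2 - 2 * r - 1) * (86 * r ^ 3 - 61 * r ^ 2 - 71 * r - 87)
      = 563 * r ^ 2 := by
    linear_combination (344 * r ^ 2 - 158 * r - 87) * hr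
  have hr₀ : r ≠ 0 := by rintro rfl; norm_num at hr
  have hderiv : 4 * r ^ 3 - 3 * r ^ 2 - 2 * r - 1 ≠ 0 :=
    left_ne_zero_of_mul (hinv ▸ mul_ne_zero (by norm_num) (pow_ne_zero 2 hr₀))
  rw [div_eq_div_iff hderiv (by norm_num)]
  linear_combination -hinv

theorem tetranacci_cube_reduce {R : Type*} [CommRing R] {r : R}
    (hr : r ^ 4 - r ^ 3 - r ^ 2 - r - 1 = 0) :
    (86 * r ^ 3 - 61 * r ^ 2 - 71 * r - 87) ^ 3
      = 651391 * r ^ 3 - 686860 * r ^ 2 + 1102354 * r + 288256 := by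
  linear_combination (636056 * r ^ 5 - 717412 * r ^ 4 - 696686 * r ^ 3 - 700583 * r ^ 2
    + 1767792 * r + 946759) * hr

theorem tetra_c_cube (α β γ δ : ℂ)
    (hα : α ^ 4 - α ^ 3 - α ^ 2 - α - 1 = 0) (hβ : β ^ 4 - β ^ 3 - β ^ 2 - β - 1 = 0)
    (hγ : γ ^ 4 - γ ^ 3 - γ ^ 2 - γ - 1 = 0) (hδ : δ ^ 4 - δ ^ 3 - δ ^ 2 - δ - 1 = 0)
    (hαβ : α ≠ β) (hαγ : α ≠ γ) (hαδ : α ≠ δ) (hβγ : β ≠ γ) (hβδ : β ≠ δ) (hγδ : γ ≠ δ)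
    (c₁ c₂ c₃ c₄ : ℂ)
    (hc₁ : c₁ = α ^ 2 / ((α - β) * (α - γ) * (α - δ)))
    (hc₂ : c₂ = β ^ 2 / ((β - α) * (β - γ) * (β - δ)))
    (hc₃ : c₃ = γ ^ 2 / ((γ - α) * (γ - β) * (γ - δ)))
    (hc₄ : c₄ = δ ^ 2 / ((δ - α) * (δ - β) * (δ - γ))) (n : ℕ) :
    c₁ ^ 3 * α ^ n + c₂ ^ 3 * β ^ n + c₃ ^ 3 * γ ^ n + c₄ ^ 3 * δ ^ n
      = (1 / 563 : ℂ) * seqU n := by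
  rw [hc₁, hc₂, hc₃, hc₄,
    tetranacci_prod_sub_eq_deriv hα hβ hγ hδ hαβ hαγ hαδ hβγ hβδ hγδ,
    tetranacci_prod_sub_eq_deriv hβ hα hγ hδ hαβ.symm hβγ hβδ hαγ hαδ hγδ,
    tetranacci_prod_sub_eq_deriv hγ hα hβ hδ hαγ.symm hβγ.symm hγδ hαβ hαδ hβδ,
    tetranacci_prod_sub_eq_deriv hδ hα hβ hγ hαδ.symm hβδ.symm hγδ.symm hαβ hαγ hβγ,
    tetranacci_sq_div_deriv hα, tetranacci_sq_div_deriv hβ, tetranacci_sq_div_deriv hγ,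
    tetranacci_sq_div_deriv hδ, div_pow, div_pow, div_pow, div_pow,
    tetranacci_cube_reduce hα, tetranacci_cube_reduce hβ, tetranacci_cube_reduce hγ,
    tetranacci_cube_reduce hδ]
  have hP := tetranacci_powerSum_eq_lucas hα hβ hγ hδ hαβ hαγ hαδ hβγ hβδ hγδ
  have hU : (563 ^ 2 * seqU n : ℂ) = 288256 * tetranacciLucas n
      + 1102354 * tetranacciLucas (n + 1) - 686860 * tetranacciLucas (n + 2)
      + 651391 * tetranacciLucas (n + 3) := by
    exact_mod_cast sq_563_mul_seqU n
  linear_combination (288256 * hP n + 1102354 * hP (n + 1) - 686860 * hP (n + 2)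
    + 651391 * hP (n + 3) - hU) / 563 ^ 3
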